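/- Under the hypotheses of the previous virtual adaptation setup (θ' = S(θ), θ̂' = S(θ̂) + H⁻¹(κ(t)²+1)A(t)ᵀ(A(t)(θ−θ̂)+ε(t)), with H = Hᵀ > 0, H·DS + DSᵀH ≤ 0 pointwise, ε ∈ L², κ·ε ∈ L²), the functions t ↦ A(t)(θ(t)−θ̂(t)) and t ↦ κ(t)A(t)(θ(t)−θ̂(t)) both belong to L². -/

import Mathlib

open MeasureTheory Set Matrix

/-- Squared Euclidean norm. -/
def esq {n : ℕ} (v : Fin n → ℝ) : ℝ := ∑ i, (v i) ^ 2

/-- Jacobian of S at z. -/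
noncomputable def jac {d : ℕ} (S : (Fin d → ℝ) → (Fin d → ℝ)) (z : Fin d → ℝ) :
    Matrix (Fin d) (Fin d) ℝ :=
  Matrix.of fun i j => fderiv ℝ S z (Pi.single j 1) i

/-!
With `e = θ - θ̂` and the Lyapunov function `V = eᵀ H e`, the `S`-part of `V'` is `≤ 0`
(mean value theorem along the segment from `θ̂` to `θ`, plus the Jacobian condition), and
completing the square in the adaptation term gives
`V' ≤ (κ² + 1)/2 ‖ε‖² - 2 (κ² + 1) ‖A e + ε/2‖²`.
Since `V ≥ 0` and the right-hand `ε`-terms are integrable, integrating shows that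
`(κ² + 1) ‖A e + ε/2‖²` is integrable on `[0, ∞)`. Finally `A e = (A e + ε/2) - ε/2` and
`κ A e = κ (A e + ε/2) - κ ε/2` are differences of `L²` functions.
-/

lemma esq_nonneg {n : ℕ} (v : Fin n → ℝ) : 0 ≤ esq v :=
  Finset.sum_nonneg fun _ _ => sq_nonneg _

lemma esq_smul {n : ℕ} (c : ℝ) (v : Fin n → ℝ) : esq (c • v) = c ^ 2 * esq v := by
  simp [esq, Finset.mul_sum, mul_pow]

lemma continuous_esq {n : ℕ} : Continuous (esq : (Fin n → ℝ) → ℝ) := by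
  unfold esq; fun_prop

lemma esq_sub_le {n : ℕ} (u v : Fin n → ℝ) : esq (u - v) ≤ 2 * esq u + 2 * esq v := by
  unfold esq
  rw [Finset.mul_sum, Finset.mul_sum, ← Finset.sum_add_distrib]
  exact Finset.sum_le_sum fun i _ => by
    simp only [Pi.sub_apply]; nlinarith [sq_nonneg (u i + v i)]

lemma dotProduct_add_eq_esq_sub {n : ℕ} (u v : Fin n → ℝ) :
    u ⬝ᵥ (u + v) = esq (u + (2 : ℝ)⁻¹ • v) - esq v / 4 := by
  unfold esq
  rw [dotProduct, Finset.sum_div, ← Finset.sum_sub_distrib]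
  refine Finset.sum_congr rfl fun i _ => ?_
  simp only [Pi.add_apply, Pi.smul_apply, smul_eq_mul]
  ring

section L2

variable {α : Type*} [MeasurableSpace α] {μ : Measure α} {s : Set α} {n : ℕ}

lemma integrableOn_esq_const_smul {v : α → Fin n → ℝ} (c : ℝ)
    (hv : IntegrableOn (fun t => esq (v t)) s μ) :
    IntegrableOn (fun t => esq (c • v t)) s μ := by
  simp only [esq_smul]
  exact hv.const_mul (c ^ 2)

lemma integrableOn_esq_sub {u v : α → Fin n → ℝ} (hu : IntegrableOn (fun t => esq (u t)) s μ)
    (hv : IntegrableOn (fun t => esq (v t)) s μ)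
    (hm : AEStronglyMeasurable (fun t => u t - v t) (μ.restrict s)) :
    IntegrableOn (fun t => esq (u t - v t)) s μ := by
  refine ((hu.add hv).const_mul 2).mono' (continuous_esq.comp_aestronglyMeasurable hm) ?_
  refine Filter.Eventually.of_forall fun t => ?_
  rw [Real.norm_of_nonneg (esq_nonneg _)]
  exact (esq_sub_le (u t) (v t)).trans_eq (mul_add _ _ _).symm

lemma integrableOn_esq_sub_half {κ : α → ℝ} {u ε : α → Fin n → ℝ}
    (hκ : AEStronglyMeasurable κ (μ.restrict s)) (hu : AEStronglyMeasurable u (μ.restrict s))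
    (hε : AEStronglyMeasurable ε (μ.restrict s))
    (hW : IntegrableOn (fun t => (κ t ^ 2 + 1) * esq (u t)) s μ)
    (hεL2 : IntegrableOn (fun t => esq (ε t)) s μ)
    (hκεL2 : IntegrableOn (fun t => esq (κ t • ε t)) s μ) :
    IntegrableOn (fun t => esq (u t - (2 : ℝ)⁻¹ • ε t)) s μ ∧
    IntegrableOn (fun t => κ t ^ 2 * esq (u t - (2 : ℝ)⁻¹ • ε t)) s μ := by
  have huL2 : IntegrableOn (fun t => esq (u t)) s μ :=
    hW.mono' (continuous_esq.comp_aestronglyMeasurable hu) (.of_forall fun t => by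
      rw [Real.norm_of_nonneg (esq_nonneg _)]
      nlinarith [esq_nonneg (u t), sq_nonneg (κ t)])
  have hκuL2 : IntegrableOn (fun t => esq (κ t • u t)) s μ :=
    hW.mono' (continuous_esq.comp_aestronglyMeasurable (hκ.smul hu)) (.of_forall fun t => by
      rw [Real.norm_of_nonneg (esq_nonneg _), esq_smul]
      nlinarith [esq_nonneg (u t), sq_nonneg (κ t)])
  constructor
  · exact integrableOn_esq_sub huL2 (integrableOn_esq_const_smul (2 : ℝ)⁻¹ hεL2)
      (hu.sub (hε.fun_const_smul _))
  · have := integrableOn_esq_sub hκuL2 (integrableOn_esq_const_smul (2 : ℝ)⁻¹ hκεL2)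
      ((hκ.smul hu).sub ((hκ.smul hε).fun_const_smul _))
    simpa only [← esq_smul, smul_sub, smul_comm (κ _) (2 : ℝ)⁻¹] using this

end L2

section Quadratic

variable {ι : Type*} [Fintype ι]

lemma Matrix.IsSymm.dotProduct_mulVec_comm {H : Matrix ι ι ℝ} (hH : H.IsSymm) (v w : ι → ℝ) :
    v ⬝ᵥ H *ᵥ w = w ⬝ᵥ H *ᵥ v := by
  rw [dotProduct_mulVec, ← hH.eq, vecMul_transpose, dotProduct_comm, hH.eq]

lemma HasDerivAt.dotProduct {f g : ℝ → ι → ℝ} {f' g' : ι → ℝ} {t : ℝ}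
    (hf : HasDerivAt f f' t) (hg : HasDerivAt g g' t) :
    HasDerivAt (fun s => f s ⬝ᵥ g s) (f' ⬝ᵥ g t + f t ⬝ᵥ g') t := by
  have : HasDerivAt (fun s => ∑ i, f s i * g s i) (∑ i, (f' i * g t i + f t i * g' i)) t :=
    .fun_sum fun i _ => (hasDerivAt_pi.mp hf i).fun_mul (hasDerivAt_pi.mp hg i)
  rwa [Finset.sum_add_distrib] at this

lemma HasDerivAt.mulVec {m : Type*} [Fintype m] {f : ℝ → ι → ℝ} {f' : ι → ℝ} {t : ℝ} (M : Matrix m ι ℝ)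
    (hf : HasDerivAt f f' t) : HasDerivAt (fun s => M *ᵥ f s) (M *ᵥ f') t :=
  (LinearMap.toContinuousLinearMap (Matrix.mulVecLin M)).hasFDerivAt.comp_hasDerivAt t hf

lemma HasDerivAt.dotProduct_mulVec_self {H : Matrix ι ι ℝ} (hH : H.IsSymm) {e : ℝ → ι → ℝ}
    {e' : ι → ℝ} {t : ℝ} (he : HasDerivAt e e' t) :
    HasDerivAt (fun s => e s ⬝ᵥ H *ᵥ e s) (2 * (e t ⬝ᵥ H *ᵥ e')) t := by
  convert he.dotProduct (he.mulVec H) using 1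
  rw [hH.dotProduct_mulVec_comm e']
  ring

lemma dotProduct_mulVec_mulVec_nonpos {H J : Matrix ι ι ℝ} (hH : H.IsSymm)
    (hJ : (-(H * J + Jᵀ * H)).PosSemidef) (e : ι → ℝ) :
    e ⬝ᵥ H *ᵥ (J *ᵥ e) ≤ 0 := by
  have hsum : e ⬝ᵥ (-(H * J + Jᵀ * H)) *ᵥ e = -(2 * (e ⬝ᵥ H *ᵥ (J *ᵥ e))) := by
    rw [neg_mulVec, add_mulVec, ← mulVec_mulVec, ← mulVec_mulVec, dotProduct_neg, dotProduct_add,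
      dotProduct_mulVec e Jᵀ, vecMul_transpose, ← hH.dotProduct_mulVec_comm]
    ring
  have := hJ.dotProduct_mulVec_nonneg e
  rw [star_trivial, hsum] at this
  linarith

end Quadratic

lemma jac_mulVec {d : ℕ} (S : (Fin d → ℝ) → (Fin d → ℝ)) (z v : Fin d → ℝ) :
    jac S z *ᵥ v = fderiv ℝ S z v := by
  have : jac S z = LinearMap.toMatrix' (fderiv ℝ S z : (Fin d → ℝ) →ₗ[ℝ] Fin d → ℝ) := by
    ext i j; rw [LinearMap.toMatrix'_apply]; rfl
  rw [this, LinearMap.toMatrix'_mulVec]; rfl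

lemma dotProduct_sub_mulVec_sub_nonpos {d : ℕ} {H : Matrix (Fin d) (Fin d) ℝ} (hH : H.IsSymm)
    {S : (Fin d → ℝ) → (Fin d → ℝ)} (hS : Differentiable ℝ S)
    (hneg : ∀ z, (-(H * jac S z + (jac S z)ᵀ * H)).PosSemidef) (x y : Fin d → ℝ) :
    (x - y) ⬝ᵥ H *ᵥ (S x - S y) ≤ 0 := by
  set e := x - y
  set g : ℝ → ℝ := fun s => e ⬝ᵥ H *ᵥ S (y + s • e)
  have hg : ∀ s, HasDerivAt g (e ⬝ᵥ H *ᵥ (jac S (y + s • e) *ᵥ e)) s := by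
    intro s
    have hline : HasDerivAt (fun s : ℝ => y + s • e) e s := by
      simpa using ((hasDerivAt_id s).smul_const e).const_add y
    have hSline := (hS (y + s • e)).hasFDerivAt.comp_hasDerivAt s hline
    rw [← jac_mulVec] at hSline
    simpa using (hasDerivAt_const s e).dotProduct (hSline.mulVec H)
  have hanti : Antitone g := antitone_of_deriv_nonpos (fun s => (hg s).differentiableAt)
    fun s => (hg s).deriv ▸ dotProduct_mulVec_mulVec_nonpos hH (hneg _) e
  have h01 := hanti zero_le_one
  simp only [g, one_smul, zero_smul, add_zero, show y + e = x by simp [e]] at h01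
  rw [mulVec_sub, dotProduct_sub]
  linarith

lemma two_mul_dotProduct_mulVec_adaptation_le {m d : ℕ} {H : Matrix (Fin d) (Fin d) ℝ}
    (hH : IsUnit H.det) (A : Matrix (Fin m) (Fin d) ℝ) (c : ℝ) {e σ : Fin d → ℝ}
    (hσ : e ⬝ᵥ H *ᵥ σ ≤ 0) (r : Fin m → ℝ) :
    2 * (e ⬝ᵥ H *ᵥ (σ - H⁻¹ *ᵥ (c • Aᵀ *ᵥ (A *ᵥ e + r))))
      ≤ c / 2 * esq r - 2 * c * esq (A *ᵥ e + (2 : ℝ)⁻¹ • r) := by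
  have hAe : e ⬝ᵥ Aᵀ *ᵥ (A *ᵥ e + r) = esq (A *ᵥ e + (2 : ℝ)⁻¹ • r) - esq r / 4 := by
    rw [dotProduct_mulVec, vecMul_transpose, dotProduct_add_eq_esq_sub]
  rw [mulVec_sub, mulVec_mulVec, mul_nonsing_inv H hH, one_mulVec, dotProduct_sub,
    dotProduct_smul, smul_eq_mul, hAe]
  linarith

lemma intervalIntegral_le_setIntegral_Ici_norm {g : ℝ → ℝ} {a b : ℝ} (hab : a ≤ b)
    (hg : IntegrableOn g (Ici a)) : ∫ t in a..b, g t ≤ ∫ t in Ici a, ‖g t‖ := by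
  rw [intervalIntegral.integral_of_le hab]
  calc ∫ t in Ioc a b, g t ≤ ∫ t in Ioc a b, ‖g t‖ :=
        (Real.le_norm_self _).trans (norm_integral_le_integral_norm _)
    _ ≤ ∫ t in Ici a, ‖g t‖ :=
      setIntegral_mono_set hg.norm (.of_forall fun _ => norm_nonneg _)
        (LE.le.eventuallyLE (Ioc_subset_Ioi_self.trans Ioi_subset_Ici_self))

lemma integrableOn_Ici_of_hasDerivAt_le_sub {V V' W g : ℝ → ℝ} {a : ℝ}
    (hV : ∀ t ∈ Ici a, HasDerivAt V (V' t) t) (hV_nonneg : ∀ t ∈ Ici a, 0 ≤ V t)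
    (hW : ContinuousOn W (Ici a)) (hW_nonneg : ∀ t ∈ Ici a, 0 ≤ W t)
    (hg : IntegrableOn g (Ici a)) (hle : ∀ t ∈ Ici a, V' t ≤ g t - W t) :
    IntegrableOn W (Ici a) := by
  rw [integrableOn_Ici_iff_integrableOn_Ioi]
  refine integrableOn_Ioi_of_intervalIntegral_norm_bounded (V a + ∫ t in Ici a, ‖g t‖) a
    (fun b => (hW.mono Icc_subset_Ici_self).integrableOn_Icc.mono_set Ioc_subset_Icc_self)
    Filter.tendsto_id ?_
  filter_upwards [Filter.eventually_ge_atTop a] with b hab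
  rw [id]
  have hWint : IntegrableOn W (Icc a b) := (hW.mono Icc_subset_Ici_self).integrableOn_Icc
  have hgint : IntegrableOn g (Icc a b) := hg.mono_set Icc_subset_Ici_self
  have hftc : V b - V a ≤ ∫ t in a..b, (g t - W t) :=
    intervalIntegral.sub_le_integral_of_hasDeriv_right_of_le hab
      (fun t ht => (hV t ht.1).continuousAt.continuousWithinAt)
      (fun t ht => (hV t ht.1.le).hasDerivWithinAt) (hgint.sub hWint)
      (fun t ht => hle t ht.1.le)
  rw [intervalIntegral.integral_sub ((intervalIntegrable_iff_integrableOn_Icc_of_le hab).2 hgint)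
    ((intervalIntegrable_iff_integrableOn_Icc_of_le hab).2 hWint)] at hftc
  have hnorm : ∫ t in a..b, ‖W t‖ = ∫ t in a..b, W t :=
    intervalIntegral.integral_congr fun t ht =>
      Real.norm_of_nonneg (hW_nonneg t (by rw [uIcc_of_le hab] at ht; exact ht.1))
  linarith [intervalIntegral_le_setIntegral_Ici_norm hab hg, hV_nonneg b hab]

/-- under the virtual adaptation dynamics, A(θ−θ̂) and κ·A(θ−θ̂)
belong to L². -/
theorem virtual_adaptation_L2 {n d : ℕ}
    (H : Matrix (Fin d) (Fin d) ℝ) (hHsymm : H.IsSymm) (hHpos : H.PosDef)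
    (S : (Fin d → ℝ) → (Fin d → ℝ)) (hS : ContDiff ℝ 1 S)
    (hneg : ∀ z : Fin d → ℝ, (-(H * jac S z + (jac S z)ᵀ * H)).PosSemidef)
    (A : ℝ → Matrix (Fin n) (Fin d) ℝ) (hA : Continuous A)
    (κ : ℝ → ℝ) (hκ : Continuous κ)
    (ε : ℝ → Fin n → ℝ) (hε : Continuous ε)
    (hεL2 : IntegrableOn (fun t => esq (ε t)) (Ici (0 : ℝ)))
    (hκεL2 : IntegrableOn (fun t => esq (κ t • ε t)) (Ici (0 : ℝ)))
    (θ θhat : ℝ → Fin d → ℝ)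
    (hθ : ∀ t, HasDerivAt θ (S (θ t)) t)
    (hθhat : ∀ t, HasDerivAt θhat
      (S (θhat t) +
        H⁻¹.mulVec ((κ t ^ 2 + 1) •
          (A t)ᵀ.mulVec ((A t).mulVec (θ t - θhat t) + ε t))) t) :
    IntegrableOn (fun t => esq ((A t).mulVec (θ t - θhat t))) (Ici (0 : ℝ)) ∧
    IntegrableOn (fun t => κ t ^ 2 * esq ((A t).mulVec (θ t - θhat t)))
      (Ici (0 : ℝ)) := by
  set e : ℝ → Fin d → ℝ := fun t => θ t - θhat t
  set u : ℝ → Fin n → ℝ := fun t => A t *ᵥ e t + (2 : ℝ)⁻¹ • ε t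
  have he : ∀ t, HasDerivAt e (S (θ t) - S (θhat t) -
      H⁻¹ *ᵥ ((κ t ^ 2 + 1) • (A t)ᵀ *ᵥ (A t *ᵥ e t + ε t))) t :=
    fun t => ((hθ t).sub (hθhat t)).congr_deriv (by abel)
  have hec : Continuous e := continuous_iff_continuousAt.2 fun t => (he t).continuousAt
  have huc : Continuous u := (hA.matrix_mulVec hec).add (hε.fun_const_smul _)
  have hW : IntegrableOn (fun t => 2 * ((κ t ^ 2 + 1) * esq (u t))) (Ici 0) := by
    refine integrableOn_Ici_of_hasDerivAt_le_sub
      (fun t _ => (he t).dotProduct_mulVec_self hHsymm)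
      (fun t _ => by simpa using hHpos.posSemidef.dotProduct_mulVec_nonneg (e t))
      (continuous_const.mul ((by fun_prop : Continuous fun t => κ t ^ 2 + 1).mul
        (continuous_esq.comp huc))).continuousOn
      (fun t _ => by have := esq_nonneg (u t); positivity)
      ((hκεL2.add hεL2).div_const 2) fun t _ => ?_
    have := two_mul_dotProduct_mulVec_adaptation_le
      (isUnit_iff_ne_zero.2 hHpos.det_pos.ne') (A t) (κ t ^ 2 + 1)
      (dotProduct_sub_mulVec_sub_nonpos hHsymm (hS.differentiable one_ne_zero) hneg (θ t) (θhat t))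
      (ε t)
    simp only [e, u, Pi.add_apply, esq_smul]
    linarith
  have := integrableOn_esq_sub_half hκ.aestronglyMeasurable huc.aestronglyMeasurable
    hε.aestronglyMeasurable ((integrable_const_mul_iff (isUnit_iff_ne_zero.2 two_ne_zero) _).1 hW) hεL2 hκεL2
  simpa only [u, add_sub_cancel_right] using this
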